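/- arXiv:2601.17319 — 6 statements merged into one kernel-verified Lean document; each statement's English description precedes it below -/
import Mathlib

section
/- If a sequence of [0,1]-valued random variables (P_t) satisfies P(P_t ≤ α) ≤ α for every α ∈ [0,1] and every t ≥ 1, and R = inf{t ≥ 1 : P_t ≤ α} is the first alarm time at fixed level α ∈ (0,1], then E[R] ≥ 1/(2α) + 1/2. -/
open MeasureTheory ENNReal

/-- Under marginal super-uniformity, the Shewhart `p`-value chart with
alarm rule `P_t ≤ α` has in-control average run length (expressed via the
survival-function formula `E[R] = ∑_{m ≥ 0} P(R > m)`) at least `1/(2α) + 1/2`. -/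
theorem arl_lower_bound_superuniform
    {Ω : Type*} [MeasurableSpace Ω] (μ : Measure Ω) [IsProbabilityMeasure μ]
    (P : ℕ → Ω → ℝ) (hmeas : ∀ t, Measurable (P t))
    (hrange : ∀ t ω, P t ω ∈ Set.Icc (0 : ℝ) 1)
    (hsup : ∀ β ∈ Set.Icc (0 : ℝ) 1, ∀ t : ℕ, 1 ≤ t →
      μ {ω | P t ω ≤ β} ≤ ENNReal.ofReal β)
    (α : ℝ) (hα : α ∈ Set.Ioc (0 : ℝ) 1)
    (R : Ω → ℕ∞)
    (hR : ∀ ω, R ω = sInf {n : ℕ∞ | ∃ t : ℕ, (t : ℕ∞) = n ∧ 1 ≤ t ∧ P t ω ≤ α}) :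
    ENNReal.ofReal (1 / (2 * α) + 1 / 2) ≤ ∑' m : ℕ, μ {ω | (m : ℕ∞) < R ω} := by
  obtain ⟨hα0, hα1⟩ := hα
  set N := Nat.floor (1/α) with hNdef
  have hNα : (N : ℝ) * α ≤ 1 := by
    have h := Nat.floor_le (by positivity : (0:ℝ) ≤ 1/α)
    have : (N : ℝ) ≤ 1/α := h
    calc (N:ℝ) * α ≤ (1/α) * α := by nlinarith
    _ = 1 := by field_simp
  have hN1 : 1 < ((N:ℝ) + 1) * α := by
    have h := Nat.lt_floor_add_one (1/α)
    have h' : 1/α < (N:ℝ) + 1 := h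
    have := (div_lt_iff₀ hα0).mp h'
    linarith
  have hmle : ∀ m : ℕ, m ≤ N → (m:ℝ) * α ≤ 1 := by
    intro m hm
    have : (m:ℝ) ≤ N := Nat.cast_le.mpr hm
    nlinarith
  -- key set identity
  have hset : ∀ m : ℕ, {ω | (m : ℕ∞) < R ω} =
      ⋂ t ∈ Finset.Icc 1 m, {ω | α < P t ω} := by
    intro m
    ext ω
    simp only [Set.mem_setOf_eq, Set.mem_iInter, Finset.mem_Icc]
    constructor
    · rintro h t ⟨ht1, htm⟩
      by_contra hle
      push_neg at hle
      have hmem : (t : ℕ∞) ∈ {n : ℕ∞ | ∃ s : ℕ, (s:ℕ∞) = n ∧ 1 ≤ s ∧ P s ω ≤ α} :=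
        ⟨t, rfl, ht1, hle⟩
      have h1 : R ω ≤ (t : ℕ∞) := (hR ω) ▸ sInf_le hmem
      have h2 : R ω ≤ (m : ℕ∞) := h1.trans (by exact_mod_cast htm)
      exact absurd h (not_lt.mpr h2)
    · intro h
      rw [hR ω]
      refine lt_of_lt_of_le (b := ((m+1 : ℕ) : ℕ∞)) ?_ (le_sInf ?_)
      · exact (Nat.cast_lt.mpr (Nat.lt_succ_self m) : (m:ℕ∞) < ((m+1 : ℕ) : ℕ∞))
      · rintro n ⟨t, rfl, ht1, htα⟩
        have hmt : m < t := by
          by_contra hc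
          push_neg at hc
          exact absurd htα (not_le.mpr (h t ⟨ht1, hc⟩))
        exact_mod_cast hmt
  -- union bound on the complement
  have hcompl : ∀ m : ℕ, μ {ω | (m:ℕ∞) < R ω}ᶜ ≤ (m : ℝ≥0∞) * ENNReal.ofReal α := by
    intro m
    have hsub : {ω | (m:ℕ∞) < R ω}ᶜ ⊆ ⋃ t ∈ Finset.Icc 1 m, {ω | P t ω ≤ α} := by
      rw [hset m]
      intro ω hω
      simp only [Set.compl_iInter, Set.mem_iUnion, Set.mem_compl_iff,
        Set.mem_setOf_eq] at hω ⊢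
      obtain ⟨t, ht, hpt⟩ := hω
      exact ⟨t, ht, not_lt.mp hpt⟩
    calc μ {ω | (m:ℕ∞) < R ω}ᶜ ≤ μ (⋃ t ∈ Finset.Icc 1 m, {ω | P t ω ≤ α}) :=
          measure_mono hsub
    _ ≤ ∑ t ∈ Finset.Icc 1 m, μ {ω | P t ω ≤ α} := measure_biUnion_finset_le _ _
    _ ≤ ∑ _t ∈ Finset.Icc 1 m, ENNReal.ofReal α :=
          Finset.sum_le_sum (fun t ht =>
            hsup α ⟨le_of_lt hα0, hα1⟩ t (Finset.mem_Icc.mp ht).1)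
    _ = (m : ℝ≥0∞) * ENNReal.ofReal α := by
          rw [Finset.sum_const, Nat.card_Icc]
          simp [nsmul_eq_mul]
  -- lower bound on survival probabilities
  have hA : ∀ m : ℕ, m ≤ N →
      ENNReal.ofReal (1 - (m:ℝ) * α) ≤ μ {ω | (m:ℕ∞) < R ω} := by
    intro m hm
    set A := {ω | (m:ℕ∞) < R ω}
    have hone : (1 : ℝ≥0∞) ≤ μ A + μ Aᶜ := by
      have h := measure_union_le (μ := μ) A Aᶜ
      simpa [Set.union_compl_self, measure_univ] using h
    have hcm : μ Aᶜ ≤ ENNReal.ofReal ((m:ℝ) * α) := by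
      rw [ENNReal.ofReal_mul (by positivity : (0:ℝ) ≤ (m:ℝ)), ENNReal.ofReal_natCast]
      exact hcompl m
    calc ENNReal.ofReal (1 - (m:ℝ) * α)
        = ENNReal.ofReal 1 - ENNReal.ofReal ((m:ℝ) * α) :=
          ENNReal.ofReal_sub 1 (by positivity)
    _ = 1 - ENNReal.ofReal ((m:ℝ) * α) := by rw [ENNReal.ofReal_one]
    _ ≤ 1 - μ Aᶜ := tsub_le_tsub_left hcm 1
    _ ≤ μ A := tsub_le_iff_right.mpr hone
  -- the real arithmetic
  have hgauss : (∑ m ∈ Finset.range (N+1), (m:ℝ)) = (N:ℝ) * ((N:ℝ)+1) / 2 := by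
    have h := Finset.sum_range_id_mul_two (N+1)
    have h' : ((∑ m ∈ Finset.range (N+1), m : ℕ) : ℝ) * 2 = ((N+1) * N : ℕ) := by
      exact_mod_cast congrArg (Nat.cast (R := ℝ)) h
    push_cast at h'
    push_cast
    linarith
  have hsum : 1/(2*α) + 1/2 ≤ ∑ m ∈ Finset.range (N+1), (1 - (m:ℝ) * α) := by
    have hexp : (∑ m ∈ Finset.range (N+1), (1 - (m:ℝ) * α))
        = ((N:ℝ)+1) - α * ((N:ℝ) * ((N:ℝ)+1) / 2) := by
      rw [Finset.sum_sub_distrib]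
      simp only [Finset.sum_const, Finset.card_range, nsmul_eq_mul, mul_one]
      rw [← Finset.sum_mul, hgauss]
      push_cast
      ring
    rw [hexp]
    have heq : 1/(2*α) + 1/2 = (1+α)/(2*α) := by field_simp
    rw [heq, div_le_iff₀ (by positivity : (0:ℝ) < 2*α)]
    nlinarith [mul_nonneg (by nlinarith : (0:ℝ) ≤ ((N:ℝ)+1)*α - 1)
      (by nlinarith : (0:ℝ) ≤ 1 + α - ((N:ℝ)+1)*α + α*α)]
  calc ENNReal.ofReal (1 / (2 * α) + 1 / 2)
      ≤ ENNReal.ofReal (∑ m ∈ Finset.range (N+1), (1 - (m:ℝ) * α)) :=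
        ENNReal.ofReal_le_ofReal hsum
  _ = ∑ m ∈ Finset.range (N+1), ENNReal.ofReal (1 - (m:ℝ) * α) :=
        ENNReal.ofReal_sum_of_nonneg (fun m hm => by
          have := hmle m (Nat.lt_succ_iff.mp (Finset.mem_range.mp hm)); linarith)
  _ ≤ ∑ m ∈ Finset.range (N+1), μ {ω | (m:ℕ∞) < R ω} :=
        Finset.sum_le_sum (fun m hm => hA m (Nat.lt_succ_iff.mp (Finset.mem_range.mp hm)))
  _ ≤ ∑' m : ℕ, μ {ω | (m:ℕ∞) < R ω} := ENNReal.sum_le_tsum _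
end

section
/- For ν = ⌊1/α⌋ with α ∈ (0,1], the finite sum Σ_{m=1}^{∞} max(1 − (m−1)α, 0) equals (ν+1)(1 − αν/2), and this quantity is bounded below by 1/(2α) + 1/2. -/
/-- For `ν = ⌊1/α⌋` with `α ∈ (0,1]`, the (finitely supported) sum
`∑_{m=1}^∞ max(1 − (m−1)α, 0)` equals `(ν+1)(1 − αν/2)`, and this quantity is bounded
below by `1/(2α) + 1/2`. -/
theorem sum_survival_lower_bound (α : ℝ) (hα : α ∈ Set.Ioc (0 : ℝ) 1) :
    (∑' m : ℕ, max (1 - (m : ℝ) * α) 0) =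
      ((⌊1 / α⌋₊ : ℝ) + 1) * (1 - α * (⌊1 / α⌋₊ : ℝ) / 2) ∧
    1 / (2 * α) + 1 / 2 ≤ ((⌊1 / α⌋₊ : ℝ) + 1) * (1 - α * (⌊1 / α⌋₊ : ℝ) / 2) := by
  obtain ⟨hα0, hα1⟩ := hα
  set ν := ⌊1 / α⌋₊ with hν
  have h1α : (0:ℝ) ≤ 1 / α := by positivity
  have hfl : (ν : ℝ) ≤ 1 / α := Nat.floor_le h1α
  have hfl' : 1 / α < (ν : ℝ) + 1 := Nat.lt_floor_add_one _
  have hle : α * ν ≤ 1 := by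
    rw [le_div_iff₀ hα0] at hfl; nlinarith
  have hgt : 1 < α * ((ν : ℝ) + 1) := by
    rw [div_lt_iff₀ hα0] at hfl'; nlinarith
  constructor
  · have hzero : ∀ m ∉ Finset.range (ν + 1), max (1 - (m : ℝ) * α) 0 = 0 := by
      intro m hm
      simp only [Finset.mem_range, not_lt] at hm
      have : (ν : ℝ) + 1 ≤ (m : ℝ) := by exact_mod_cast hm
      have : 1 - (m : ℝ) * α ≤ 0 := by nlinarith
      exact max_eq_right this
    rw [tsum_eq_sum hzero]
    have hterm : ∀ m ∈ Finset.range (ν + 1), max (1 - (m : ℝ) * α) 0 = 1 - (m : ℝ) * α := by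
      intro m hm
      simp only [Finset.mem_range, Nat.lt_succ_iff] at hm
      have hmν : (m : ℝ) ≤ (ν : ℝ) := by exact_mod_cast hm
      have : (0:ℝ) ≤ 1 - (m : ℝ) * α := by nlinarith
      exact max_eq_left this
    rw [Finset.sum_congr rfl hterm]
    have hgauss : (∑ m ∈ Finset.range (ν + 1), (m : ℝ)) = (ν : ℝ) * ((ν : ℝ) + 1) / 2 := by
      have h2 : (∑ m ∈ Finset.range (ν + 1), m) * 2 = (ν + 1) * ν := by
        simpa using Finset.sum_range_id_mul_two (ν + 1)
      have h3 := congrArg (Nat.cast : ℕ → ℝ) h2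
      push_cast at h3 ⊢
      linarith
    rw [Finset.sum_sub_distrib, Finset.sum_const, ← Finset.sum_mul, hgauss]
    simp only [Finset.card_range]
    push_cast
    ring
  · rw [← sub_nonneg]
    have key : ((ν : ℝ) + 1) * (1 - α * ν / 2) - (1 / (2 * α) + 1 / 2)
        = (1 - α * ν) * (α * ((ν:ℝ) + 1) - 1) / (2 * α) := by
      field_simp; ring
    rw [key]
    have h1 : (0:ℝ) ≤ 1 - α * ν := by linarith
    have h2 : (0:ℝ) ≤ α * ((ν:ℝ) + 1) - 1 := by linarith
    positivity
end

section
/- Let (P_t) satisfy P(P_t ≤ α) ≤ α for all t and fixed α ∈ (0,1], and let R_k = inf{t ≥ 1 : #{s ≤ t : P_s ≤ α} ≥ k} be the time of the k-th alarm, for k ≥ 1. Then E[R_k] ≥ (ν+1)(1 − αν/(2k)) ≥ k/(2α) + 1/2, where ν = ⌊k/α⌋. -/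
/-!
The number `N_m` of alarms up to time `m` has mean at most `mα`, so by Markov's inequality
`P(R_k > m) = P(N_m < k) ≥ 1 - mα/k`. Summing these survival bounds over `m = 0, …, ν`,
the last index where they are nonnegative, gives `(ν+1)(1 - αν/(2k))`.
-/

open MeasureTheory ENNReal Finset

section Counting

variable {Ω ι : Type*} [MeasurableSpace Ω] (μ : Measure Ω) (s : Finset ι) (p : ι → Ω → Prop)
  [∀ i ω, Decidable (p i ω)]

theorem natCast_mul_measure_le_card_filter_le_sum (hp : ∀ i ∈ s, MeasurableSet {ω | p i ω})
    (k : ℕ) : (k : ℝ≥0∞) * μ {ω | k ≤ #{i ∈ s | p i ω}} ≤ ∑ i ∈ s, μ {ω | p i ω} := by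
  set count : Ω → ℝ≥0∞ := fun ω => ∑ i ∈ s, {ω | p i ω}.indicator 1 ω
  have hcount : ∀ ω, (#{i ∈ s | p i ω} : ℝ≥0∞) = count ω := by
    intro ω
    rw [card_filter, Nat.cast_sum]
    refine sum_congr rfl fun i _ => ?_
    by_cases h : p i ω <;> simp [h]
  have hmeas : ∀ i ∈ s, Measurable ({ω | p i ω}.indicator (1 : Ω → ℝ≥0∞)) :=
    fun i hi => measurable_one.indicator (hp i hi)
  calc (k : ℝ≥0∞) * μ {ω | k ≤ #{i ∈ s | p i ω}}
      = k * μ {ω | (k : ℝ≥0∞) ≤ count ω} := by simp only [← hcount, Nat.cast_le]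
    _ ≤ ∫⁻ ω, count ω ∂μ := mul_meas_ge_le_lintegral₀ (s.measurable_sum hmeas).aemeasurable _
    _ = ∑ i ∈ s, μ {ω | p i ω} := by
      rw [lintegral_finsetSum _ hmeas]
      exact sum_congr rfl fun i hi => lintegral_indicator_one (hp i hi)

theorem ofReal_one_sub_le_measure_card_filter_lt [IsProbabilityMeasure μ]
    (hp : ∀ i ∈ s, MeasurableSet {ω | p i ω}) {a : ℝ} (ha : 0 ≤ a)
    (hpa : ∀ i ∈ s, μ {ω | p i ω} ≤ ENNReal.ofReal a) {k : ℕ} (hk : k ≠ 0) :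
    ENNReal.ofReal (1 - #s * a / k) ≤ μ {ω | #{i ∈ s | p i ω} < k} := by
  have hmarkov : μ {ω | k ≤ #{i ∈ s | p i ω}} ≤ ENNReal.ofReal (#s * a / k) := by
    rw [ENNReal.ofReal_div_of_pos (by positivity), ENNReal.ofReal_mul (by positivity),
      ofReal_natCast, ofReal_natCast, ENNReal.le_div_iff_mul_le (by simp [hk]) (by simp), mul_comm]
    calc (k : ℝ≥0∞) * μ {ω | k ≤ #{i ∈ s | p i ω}} ≤ ∑ i ∈ s, μ {ω | p i ω} :=
          natCast_mul_measure_le_card_filter_le_sum μ s p hp k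
      _ ≤ ∑ i ∈ s, ENNReal.ofReal a := sum_le_sum hpa
      _ = #s * ENNReal.ofReal a := by rw [sum_const, nsmul_eq_mul]
  have hcompl : {ω | #{i ∈ s | p i ω} < k} = {ω | k ≤ #{i ∈ s | p i ω}}ᶜ := by
    ext ω; simp
  rw [ENNReal.ofReal_sub _ (by positivity), ofReal_one, hcompl, tsub_le_iff_left]
  calc (1 : ℝ≥0∞) = μ Set.univ := measure_univ.symm
    _ ≤ _ := measure_univ_le_add_compl _
    _ ≤ _ := by gcongr

end Counting

theorem natCast_lt_sInf_setOf_le_iff {f : ℕ → ℕ} (hf : Monotone f) {k : ℕ} (hf0 : f 0 < k)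
    (m : ℕ) : (m : ℕ∞) < sInf {n : ℕ∞ | ∃ t : ℕ, (t : ℕ∞) = n ∧ 1 ≤ t ∧ k ≤ f t} ↔ f m < k := by
  constructor
  · intro hm
    by_contra! hkm
    have hm0 : m ≠ 0 := by rintro rfl; omega
    refine (sInf_le ?_).not_gt hm
    exact ⟨m, rfl, Nat.one_le_iff_ne_zero.2 hm0, hkm⟩
  · intro hm
    refine (ENat.natCast_lt_natCast.2 m.lt_succ_self).trans_le (le_sInf ?_)
    rintro _ ⟨t, rfl, -, hkt⟩
    exact ENat.natCast_le_natCast.2 (Nat.succ_le_of_lt (hf.reflect_lt (hm.trans_le hkt)))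

theorem sum_range_one_sub_mul_div (α c : ℝ) (n : ℕ) :
    ∑ m ∈ range (n + 1), (1 - m * α / c) = (n + 1) * (1 - α * n / (2 * c)) := by
  induction n with
  | zero => simp
  | succ n ih =>
    rw [sum_range_succ, ih]
    push_cast
    ring

theorem div_two_mul_add_half_le_floor_add_one_mul {α x : ℝ} (hα : 0 < α) (hx : 0 < x) :
    x / (2 * α) + 1 / 2 ≤ (⌊x / α⌋₊ + 1) * (1 - α * ⌊x / α⌋₊ / (2 * x)) := by
  set ν : ℕ := ⌊x / α⌋₊
  have hν : α * ν ≤ x := by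
    have := Nat.floor_le (div_pos hx hα).le
    rwa [le_div_iff₀ hα, mul_comm] at this
  have hν' : x < α * ν + α := by
    have := Nat.lt_floor_add_one (x / α)
    rwa [div_lt_iff₀ hα, add_mul, one_mul, mul_comm] at this
  -- with `r = x - αν ∈ [0, α)` the gap is `r (α - r) / (2αx)`
  have hgap : (ν + 1) * (1 - α * ν / (2 * x)) - (x / (2 * α) + 1 / 2)
      = (x - α * ν) * (α - (x - α * ν)) / (2 * α * x) := by
    field_simp
    ring
  have : 0 ≤ (x - α * ν) * (α - (x - α * ν)) / (2 * α * x) := by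
    apply div_nonneg <;> nlinarith
  linarith

theorem kARL_lower_bound_superuniform_general
    {Ω : Type*} [MeasurableSpace Ω] (μ : Measure Ω) [IsProbabilityMeasure μ]
    (P : ℕ → Ω → ℝ) (hmeas : ∀ t, Measurable (P t))
    (α : ℝ) (hα : α ∈ Set.Ioc (0 : ℝ) 1)
    (hsup : ∀ t : ℕ, 1 ≤ t → μ {ω | P t ω ≤ α} ≤ ENNReal.ofReal α)
    (k : ℕ) (hk : 1 ≤ k)
    (Rk : Ω → ℕ∞)
    (hRk : ∀ ω, Rk ω = sInf {n : ℕ∞ | ∃ t : ℕ, (t : ℕ∞) = n ∧ 1 ≤ t ∧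
      k ≤ ((Finset.Icc 1 t).filter (fun s => P s ω ≤ α)).card}) :
    ENNReal.ofReal (((⌊(k : ℝ) / α⌋₊ : ℝ) + 1) * (1 - α * (⌊(k : ℝ) / α⌋₊ : ℝ) / (2 * k)))
        ≤ ∑' m : ℕ, μ {ω | (m : ℕ∞) < Rk ω} ∧
      (k : ℝ) / (2 * α) + 1 / 2 ≤
        ((⌊(k : ℝ) / α⌋₊ : ℝ) + 1) * (1 - α * (⌊(k : ℝ) / α⌋₊ : ℝ) / (2 * k)) := by
  refine ⟨?_, div_two_mul_add_half_le_floor_add_one_mul hα.1 (by exact_mod_cast hk)⟩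
  have hsurvival (m : ℕ) : ENNReal.ofReal (1 - m * α / k) ≤ μ {ω | (m : ℕ∞) < Rk ω} := by
    have hcount (ω : Ω) : Monotone fun t => #{s ∈ Icc 1 t | P s ω ≤ α} :=
      fun _ _ h => card_le_card (filter_subset_filter _ (Icc_subset_Icc_right h))
    have hcount0 (ω : Ω) : #{s ∈ Icc 1 0 | P s ω ≤ α} < k := by simpa using Nat.lt_of_succ_le hk
    simp_rw [hRk, natCast_lt_sInf_setOf_le_iff (hcount _) (hcount0 _)]
    simpa using ofReal_one_sub_le_measure_card_filter_lt μ (Icc 1 m) (fun s ω => P s ω ≤ α)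
      (fun s _ => measurableSet_le (hmeas s) measurable_const) hα.1.le
      (fun s hs => hsup s (mem_Icc.1 hs).1) (by omega)
  set ν := ⌊(k : ℝ) / α⌋₊
  calc ENNReal.ofReal ((ν + 1) * (1 - α * ν / (2 * k)))
      = ENNReal.ofReal (∑ m ∈ range (ν + 1), (1 - m * α / k)) := by
        rw [sum_range_one_sub_mul_div]
    _ ≤ ∑ m ∈ range (ν + 1), ENNReal.ofReal (1 - m * α / k) :=
        le_sum_of_subadditive _ ofReal_zero.le (fun _ _ => ofReal_add_le) _ _
    _ ≤ ∑ m ∈ range (ν + 1), μ {ω | (m : ℕ∞) < Rk ω} :=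
        sum_le_sum fun m _ => hsurvival m
    _ ≤ ∑' m : ℕ, μ {ω | (m : ℕ∞) < Rk ω} := ENNReal.sum_le_tsum _

/-- Under marginal super-uniformity, the expected time to the `k`-th alarm
(the `k`-ARL, expressed via the survival-function formula) is at least
`(ν+1)(1 − αν/(2k))`, where `ν = ⌊k/α⌋`, and this quantity is at least `k/(2α) + 1/2`. -/
theorem kARL_lower_bound_superuniform
    {Ω : Type*} [MeasurableSpace Ω] (μ : Measure Ω) [IsProbabilityMeasure μ]
    (P : ℕ → Ω → ℝ) (hmeas : ∀ t, Measurable (P t))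
    (hrange : ∀ t ω, P t ω ∈ Set.Icc (0 : ℝ) 1)
    (α : ℝ) (hα : α ∈ Set.Ioc (0 : ℝ) 1)
    (hsup : ∀ t : ℕ, 1 ≤ t → μ {ω | P t ω ≤ α} ≤ ENNReal.ofReal α)
    (k : ℕ) (hk : 1 ≤ k)
    (Rk : Ω → ℕ∞)
    (hRk : ∀ ω, Rk ω = sInf {n : ℕ∞ | ∃ t : ℕ, (t : ℕ∞) = n ∧ 1 ≤ t ∧
      k ≤ ((Finset.Icc 1 t).filter (fun s => P s ω ≤ α)).card}) :
    ENNReal.ofReal (((⌊(k : ℝ) / α⌋₊ : ℝ) + 1) * (1 - α * (⌊(k : ℝ) / α⌋₊ : ℝ) / (2 * k)))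
        ≤ ∑' m : ℕ, μ {ω | (m : ℕ∞) < Rk ω} ∧
      (k : ℝ) / (2 * α) + 1 / 2 ≤
        ((⌊(k : ℝ) / α⌋₊ : ℝ) + 1) * (1 - α * (⌊(k : ℝ) / α⌋₊ : ℝ) / (2 * k)) :=
  kARL_lower_bound_superuniform_general μ P hmeas α hα hsup k hk Rk hRk
end

section
/- Let (P_t) be adapted to a filtration (ℱ_t) with P(P_t ≤ α | ℱ_{t−1}) ≤ α a.s. for all t and fixed α ∈ (0,1]. Let R_k be the time of the k-th event among {P_t ≤ α}. Then E[R_k] ≥ k/α for every integer k ≥ 1. -/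
/-!
Write `N t` for the number of alarms among times `1, …, t`. Since `min (N m) k` only grows at a
time `s + 1` with `N s < k`, and an alarm at `s + 1` has conditional probability at most `α`
given `ℱ s ∋ {N s < k}`,
`k · ℙ(N m ≥ k) ≤ 𝔼[min (N m) k] ≤ α · ∑_{s < m} ℙ(N s < k) ≤ α · ∑_s ℙ(R_k > s) = α · 𝔼[R_k]`.
If `𝔼[R_k] < ∞` then `ℙ(N m ≥ k) → 1`, and letting `m → ∞` gives `k ≤ α · 𝔼[R_k]`.
-/

open MeasureTheory ENNReal Finset Filter Topology

section

variable {Ω : Type*}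

noncomputable def countHits (A : ℕ → Set Ω) (t : ℕ) (ω : Ω) : ℕ :=
  ∑ s ∈ Icc 1 t, (A s).indicator 1 ω

variable {A : ℕ → Set Ω}

lemma countHits_zero (ω : Ω) : countHits A 0 ω = 0 := by
  simp [countHits]

lemma countHits_succ (t : ℕ) (ω : Ω) :
    countHits A (t + 1) ω = countHits A t ω + (A (t + 1)).indicator 1 ω :=
  sum_Icc_succ_top (by omega) _

lemma countHits_mono {t t' : ℕ} (h : t ≤ t') (ω : Ω) : countHits A t ω ≤ countHits A t' ω :=
  sum_le_sum_of_subset (Icc_subset_Icc_right h)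

lemma countHits_setOf_eq_card_filter (p : ℕ → Ω → Prop) [∀ s ω, Decidable (p s ω)]
    (t : ℕ) (ω : Ω) : countHits (fun s => {ω | p s ω}) t ω = #{s ∈ Icc 1 t | p s ω} := by
  simp only [countHits, card_filter, Set.indicator_apply, Set.mem_ofPred_eq, Pi.one_apply]

lemma min_countHits_eq_sum (k m : ℕ) (ω : Ω) :
    min (countHits A m ω) k =
      ∑ s ∈ range m, ({ω | countHits A s ω < k} ∩ A (s + 1)).indicator 1 ω := by
  induction m with
  | zero => simp [countHits_zero]
  | succ m ih =>
    rw [sum_range_succ, ← ih, countHits_succ]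
    by_cases hA : ω ∈ A (m + 1) <;> by_cases hk : countHits A m ω < k <;>
      simp [hA, hk] <;> omega

lemma lt_sInf_of_countHits_lt {k m : ℕ} {ω : Ω} (h : countHits A m ω < k) :
    (m : ℕ∞) < sInf {n : ℕ∞ | ∃ t : ℕ, (t : ℕ∞) = n ∧ 1 ≤ t ∧ k ≤ countHits A t ω} := by
  rw [← ENat.add_one_le_iff (ENat.natCast_ne_top m)]
  refine le_sInf ?_
  rintro _ ⟨t, rfl, -, hkt⟩
  have hmt : m < t := lt_of_not_ge fun htm => (hkt.trans (countHits_mono htm ω)).not_gt h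
  exact_mod_cast hmt

lemma measurable_countHits {m : MeasurableSpace Ω} {t : ℕ}
    (hA : ∀ s ≤ t, MeasurableSet (A s)) : Measurable (countHits A t) :=
  Finset.measurable_sum _ fun s hs => measurable_const.indicator (hA s (mem_Icc.1 hs).2)

lemma measurableSet_countHits_lt {m0 : MeasurableSpace Ω} (ℱ : Filtration ℕ m0)
    (hA : ∀ s, MeasurableSet[ℱ s] (A s)) (k t : ℕ) :
    MeasurableSet[ℱ t] {ω | countHits A t ω < k} :=
  measurable_countHits (fun s hs => ℱ.mono hs _ (hA s)) measurableSet_Iio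

lemma natCast_mul_measure_le_sum {m0 : MeasurableSpace Ω} (μ : Measure Ω)
    (hA : ∀ s, MeasurableSet (A s)) (k m : ℕ) :
    k * μ {ω | k ≤ countHits A m ω} ≤
      ∑ s ∈ range m, μ ({ω | countHits A s ω < k} ∩ A (s + 1)) := by
  have hmeas : ∀ s, MeasurableSet {ω | countHits A s ω < k} := fun s =>
    measurable_countHits (fun r _ => hA r) measurableSet_Iio
  have hge : MeasurableSet {ω | k ≤ countHits A m ω} :=
    measurable_countHits (fun r _ => hA r) measurableSet_Ici
  have hstop : ∀ ω, {ω | k ≤ countHits A m ω}.indicator (fun _ => (k : ℝ≥0∞)) ω ≤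
      ∑ s ∈ range m, ({ω | countHits A s ω < k} ∩ A (s + 1)).indicator 1 ω := by
    intro ω
    have hsum : ((min (countHits A m ω) k : ℕ) : ℝ≥0∞) =
        ∑ s ∈ range m, ({ω | countHits A s ω < k} ∩ A (s + 1)).indicator 1 ω := by
      rw [min_countHits_eq_sum, Nat.cast_sum]
      refine sum_congr rfl fun s _ => ?_
      by_cases hs : ω ∈ {ω | countHits A s ω < k} ∩ A (s + 1) <;> simp [hs]
    rw [← hsum]
    by_cases h : k ≤ countHits A m ω <;> simp [h]
  calc k * μ {ω | k ≤ countHits A m ω}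
      = ∫⁻ ω, {ω | k ≤ countHits A m ω}.indicator (fun _ => (k : ℝ≥0∞)) ω ∂μ := by
        rw [lintegral_indicator_const hge]
    _ ≤ ∫⁻ ω, ∑ s ∈ range m, ({ω | countHits A s ω < k} ∩ A (s + 1)).indicator 1 ω ∂μ :=
        lintegral_mono hstop
    _ = ∑ s ∈ range m, μ ({ω | countHits A s ω < k} ∩ A (s + 1)) := by
        rw [lintegral_finsetSum _ fun s _ => measurable_one.indicator ((hmeas s).inter (hA _))]
        simp_rw [lintegral_indicator_one ((hmeas _).inter (hA _))]

lemma measure_inter_le_of_condExp_indicator_le {m m0 : MeasurableSpace Ω} {μ : Measure Ω}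
    [IsFiniteMeasure μ] (hm : m ≤ m0) {s t : Set Ω} (hs : MeasurableSet[m] s)
    (ht : MeasurableSet t) {c : ℝ}
    (hc : ∀ᵐ ω ∂μ, μ[t.indicator (fun _ => (1 : ℝ)) | m] ω ≤ c) :
    μ (s ∩ t) ≤ ENNReal.ofReal c * μ s := by
  have hreal : μ.real (s ∩ t) ≤ c * μ.real s :=
    calc μ.real (s ∩ t) = ∫ ω in s, t.indicator (fun _ => (1 : ℝ)) ω ∂μ := by
          rw [integral_indicator_const _ ht, measureReal_restrict_apply ht, smul_eq_mul, mul_one,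
            Set.inter_comm]
      _ = ∫ ω in s, μ[t.indicator (fun _ => (1 : ℝ)) | m] ω ∂μ :=
          (setIntegral_condExp hm ((integrable_const 1).indicator ht) hs).symm
      _ ≤ ∫ _ in s, c ∂μ :=
          setIntegral_mono_ae integrable_condExp.integrableOn integrableOn_const hc
      _ = c * μ.real s := by rw [setIntegral_const, smul_eq_mul, mul_comm]
  calc μ (s ∩ t) = ENNReal.ofReal (μ.real (s ∩ t)) := (ofReal_measureReal).symm
    _ ≤ ENNReal.ofReal (c * μ.real s) := ENNReal.ofReal_le_ofReal hreal
    _ = ENNReal.ofReal c * μ s := by rw [ENNReal.ofReal_mul' measureReal_nonneg, ofReal_measureReal]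

section ConditionalSuperUniform

variable {m0 : MeasurableSpace Ω} {μ : Measure Ω} {ℱ : Filtration ℕ m0} {α : ℝ}

lemma natCast_mul_measure_le_ofReal_mul_sum [IsFiniteMeasure μ]
    (hA : ∀ s, MeasurableSet[ℱ s] (A s))
    (hcond : ∀ s, ∀ᵐ ω ∂μ, μ[(A (s + 1)).indicator (fun _ => (1 : ℝ)) | ℱ s] ω ≤ α)
    (k m : ℕ) :
    k * μ {ω | k ≤ countHits A m ω} ≤
      ENNReal.ofReal α * ∑ s ∈ range m, μ {ω | countHits A s ω < k} := by
  rw [mul_sum]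
  refine (natCast_mul_measure_le_sum μ (fun s => ℱ.le s _ (hA s)) k m).trans
    (sum_le_sum fun s _ => ?_)
  exact measure_inter_le_of_condExp_indicator_le (ℱ.le s) (measurableSet_countHits_lt ℱ hA k s)
    (ℱ.le _ _ (hA (s + 1))) (hcond s)

lemma natCast_le_ofReal_mul_tsum [IsProbabilityMeasure μ] (hα : 0 < α)
    (hA : ∀ s, MeasurableSet[ℱ s] (A s))
    (hcond : ∀ s, ∀ᵐ ω ∂μ, μ[(A (s + 1)).indicator (fun _ => (1 : ℝ)) | ℱ s] ω ≤ α)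
    (k : ℕ) :
    (k : ℝ≥0∞) ≤ ENNReal.ofReal α * ∑' s, μ {ω | countHits A s ω < k} := by
  set S := ∑' s, μ {ω | countHits A s ω < k}
  by_cases hS : S = ∞
  · rw [hS, mul_top (ofReal_pos.2 hα).ne']
    exact le_top
  have hsurvival : Tendsto (fun m => μ {ω | k ≤ countHits A m ω}) atTop (𝓝 1) := by
    have hcompl : ∀ m, μ {ω | k ≤ countHits A m ω} = 1 - μ {ω | countHits A m ω < k} := by
      intro m
      rw [← prob_compl_eq_one_sub (ℱ.le m _ (measurableSet_countHits_lt ℱ hA k m))]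
      simp only [Set.compl_ofPred, not_lt]
    simpa [hcompl] using ENNReal.Tendsto.sub tendsto_const_nhds
      (ENNReal.tendsto_atTop_zero_of_tsum_ne_top hS) (Or.inl one_ne_top)
  have hlim : Tendsto (fun m => k * μ {ω | k ≤ countHits A m ω}) atTop (𝓝 k) := by
    simpa using ENNReal.Tendsto.const_mul hsurvival (Or.inr (natCast_ne_top k))
  refine le_of_tendsto' hlim fun m => ?_
  calc k * μ {ω | k ≤ countHits A m ω}
      ≤ ENNReal.ofReal α * ∑ s ∈ range m, μ {ω | countHits A s ω < k} :=
        natCast_mul_measure_le_ofReal_mul_sum hA hcond k m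
    _ ≤ ENNReal.ofReal α * S := by gcongr; exact ENNReal.sum_le_tsum _

end ConditionalSuperUniform

end

theorem kARL_lower_bound_conditional_superuniform_general
    {Ω : Type*} {m0 : MeasurableSpace Ω} (μ : Measure Ω) [IsProbabilityMeasure μ]
    (ℱ : Filtration ℕ m0) (P : ℕ → Ω → ℝ)
    (hadapted : Adapted ℱ P)
    (α : ℝ) (hα : α ∈ Set.Ioc (0 : ℝ) 1)
    (hcond : ∀ β ∈ Set.Icc (0 : ℝ) 1, ∀ t : ℕ, 1 ≤ t →
      ∀ᵐ ω ∂μ, (μ[Set.indicator {ω' | P t ω' ≤ β} (fun _ => (1 : ℝ)) | ℱ (t - 1)]) ω ≤ β)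
    (k : ℕ)
    (Rk : Ω → ℕ∞)
    (hRk : ∀ ω, Rk ω = sInf {n : ℕ∞ | ∃ t : ℕ, (t : ℕ∞) = n ∧ 1 ≤ t ∧
      k ≤ ((Finset.Icc 1 t).filter (fun s => P s ω ≤ α)).card}) :
    ENNReal.ofReal ((k : ℝ) / α) ≤ ∑' m : ℕ, μ {ω | (m : ℕ∞) < Rk ω} := by
  set A : ℕ → Set Ω := fun s => {ω | P s ω ≤ α}
  have hA : ∀ s, MeasurableSet[ℱ s] (A s) := fun s =>
    measurableSet_le (hadapted s) measurable_const
  have hAcond : ∀ s, ∀ᵐ ω ∂μ, μ[(A (s + 1)).indicator (fun _ => (1 : ℝ)) | ℱ s] ω ≤ α :=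
    fun s => hcond α ⟨hα.1.le, hα.2⟩ (s + 1) le_add_self
  have hsubset : ∀ m, {ω | countHits A m ω < k} ⊆ {ω | (m : ℕ∞) < Rk ω} := by
    intro m ω hω
    simpa only [Set.mem_ofPred_eq, hRk, A, countHits_setOf_eq_card_filter] using
      lt_sInf_of_countHits_lt hω
  calc ENNReal.ofReal ((k : ℝ) / α) = k / ENNReal.ofReal α := by
        rw [ENNReal.ofReal_div_of_pos hα.1, ofReal_natCast]
    _ ≤ ∑' m, μ {ω | countHits A m ω < k} :=
        ENNReal.div_le_of_le_mul' (natCast_le_ofReal_mul_tsum hα.1 hA hAcond k)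
    _ ≤ ∑' m : ℕ, μ {ω | (m : ℕ∞) < Rk ω} :=
        ENNReal.tsum_le_tsum fun m => measure_mono (hsubset m)

/-- Under conditional super-uniformity with respect to a filtration,
the expected time to the `k`-th alarm (expressed via the survival-function formula)
is at least `k/α` for every integer `k ≥ 1`. -/
theorem kARL_lower_bound_conditional_superuniform
    {Ω : Type*} {m0 : MeasurableSpace Ω} (μ : Measure Ω) [IsProbabilityMeasure μ]
    (ℱ : Filtration ℕ m0) (P : ℕ → Ω → ℝ)
    (hadapted : Adapted ℱ P)
    (hrange : ∀ t ω, P t ω ∈ Set.Icc (0 : ℝ) 1)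
    (α : ℝ) (hα : α ∈ Set.Ioc (0 : ℝ) 1)
    (hcond : ∀ β ∈ Set.Icc (0 : ℝ) 1, ∀ t : ℕ, 1 ≤ t →
      ∀ᵐ ω ∂μ, (μ[Set.indicator {ω' | P t ω' ≤ β} (fun _ => (1 : ℝ)) | ℱ (t - 1)]) ω ≤ β)
    (k : ℕ) (hk : 1 ≤ k)
    (Rk : Ω → ℕ∞)
    (hRk : ∀ ω, Rk ω = sInf {n : ℕ∞ | ∃ t : ℕ, (t : ℕ∞) = n ∧ 1 ≤ t ∧
      k ≤ ((Finset.Icc 1 t).filter (fun s => P s ω ≤ α)).card}) :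
    ENNReal.ofReal ((k : ℝ) / α) ≤ ∑' m : ℕ, μ {ω | (m : ℕ∞) < Rk ω} :=
  kARL_lower_bound_conditional_superuniform_general μ ℱ P hadapted α hα hcond k Rk hRk
end

section
/- A decreasing function γ : [0,1] → [0,∞] is a p-to-e calibrator (i.e., E[γ(P)] ≤ 1 for every random variable P satisfying P(P ≤ α) ≤ α for all α ∈ [0,1]) if and only if ∫_0^1 γ(p) dp ≤ 1. -/
/-!
The uniform distribution on `[0,1]` is itself a p-value, which gives necessity. For sufficiency,
since `γ` is decreasing, each superlevel set `{γ > c} ∩ [0,1]` lies between `[0,s)` and `[0,s]`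
for `s` its supremum, so super-uniformity of `P` gives `P(γ(P) > c) ≤ s ≤ |{γ > c} ∩ [0,1]|`.
Integrating over `c` (layer-cake formula) yields `𝔼[γ(P)] ≤ ∫₀¹ γ`.
-/

open MeasureTheory ENNReal Set

theorem volume_Ioi_inter_ofReal_lt (a : ℝ≥0∞) :
    volume (Ioi (0 : ℝ) ∩ {t | ENNReal.ofReal t < a}) = a := by
  rcases eq_or_ne a ∞ with rfl | ha
  · simp
  · have : Ioi (0 : ℝ) ∩ {t | ENNReal.ofReal t < a} = Ioo 0 a.toReal := by
      ext t
      simp only [mem_inter_iff, mem_Ioi, mem_ofPred_eq, mem_Ioo, and_congr_right_iff]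
      exact fun ht => ENNReal.ofReal_lt_iff_lt_toReal ht.le ha
    rw [this, Real.volume_Ioo, sub_zero, ENNReal.ofReal_toReal ha]

theorem lintegral_eq_lintegral_meas_ofReal_lt {α : Type*} [MeasurableSpace α] (μ : Measure α)
    [SFinite μ] {f : α → ℝ≥0∞} (hf : Measurable f) :
    ∫⁻ a, f a ∂μ = ∫⁻ t in Ioi 0, μ {a | ENNReal.ofReal t < f a} := by
  have hS : MeasurableSet {p : α × ℝ | ENNReal.ofReal p.2 < f p.1} :=
    measurableSet_lt (by fun_prop) (by fun_prop)
  calc ∫⁻ a, f a ∂μ = μ.prod (volume.restrict (Ioi 0)) {p | ENNReal.ofReal p.2 < f p.1} := by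
        rw [Measure.prod_apply hS]
        refine lintegral_congr fun a => ?_
        rw [Measure.restrict_apply' measurableSet_Ioi, inter_comm]
        exact (volume_Ioi_inter_ofReal_lt (f a)).symm
    _ = _ := Measure.prod_apply_symm hS

theorem lintegral_le_lintegral_of_meas_lt_le {α β : Type*} [MeasurableSpace α]
    [MeasurableSpace β] {μ : Measure α} {ν : Measure β} [SFinite μ] [SFinite ν]
    {f : α → ℝ≥0∞} {g : β → ℝ≥0∞} (hf : Measurable f) (hg : Measurable g)
    (h : ∀ c, μ {a | c < f a} ≤ ν {b | c < g b}) :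
    ∫⁻ a, f a ∂μ ≤ ∫⁻ b, g b ∂ν := by
  rw [lintegral_eq_lintegral_meas_ofReal_lt μ hf, lintegral_eq_lintegral_meas_ofReal_lt ν hg]
  exact lintegral_mono fun t => h _

theorem AntitoneOn.exists_superlevel_sandwich {β : Type*} [Preorder β] {f : ℝ → β} {a b : ℝ}
    (hab : a ≤ b) (hf : AntitoneOn f (Icc a b)) (c : β) :
    ∃ s ∈ Icc a b, Ico a s ⊆ {p | c < f p} ∧ {p ∈ Icc a b | c < f p} ⊆ Iic s := by
  set S := {p ∈ Icc a b | c < f p}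
  rcases S.eq_empty_or_nonempty with hS | hS
  · exact ⟨a, left_mem_Icc.2 hab, by simp, by simp [hS]⟩
  have hbdd : BddAbove S := ⟨b, fun p hp => hp.1.2⟩
  have hsb : sSup S ≤ b := csSup_le hS fun p hp => hp.1.2
  obtain ⟨p₀, hp₀⟩ := hS
  refine ⟨sSup S, ⟨hp₀.1.1.trans (le_csSup hbdd hp₀), hsb⟩, fun q hq => ?_,
    fun p hp => le_csSup hbdd hp⟩
  obtain ⟨p, hp, hqp⟩ := exists_lt_of_lt_csSup ⟨p₀, hp₀⟩ hq.2
  exact hp.2.trans_le (hf ⟨hq.1, hq.2.le.trans hsb⟩ hp.1 hqp.le)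

def IsPValue {Ω : Type*} [MeasurableSpace Ω] (μ : Measure Ω) (P : Ω → ℝ) : Prop :=
  ∀ α ∈ Icc (0 : ℝ) 1, μ {ω | P ω ≤ α} ≤ ENNReal.ofReal α

namespace IsPValue

variable {Ω : Type*} [MeasurableSpace Ω] {μ : Measure Ω} {P : Ω → ℝ}

theorem meas_lt_comp_le (hP : IsPValue μ P) (hPmem : ∀ ω, P ω ∈ Icc (0 : ℝ) 1)
    {β : Type*} [Preorder β] {γ : ℝ → β} (hγ : AntitoneOn γ (Icc 0 1)) (c : β) :
    μ {ω | c < γ (P ω)} ≤ volume.restrict (Icc 0 1) {p | c < γ p} := by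
  obtain ⟨s, hs, hlower, hupper⟩ := hγ.exists_superlevel_sandwich zero_le_one c
  calc μ {ω | c < γ (P ω)} ≤ μ {ω | P ω ≤ s} := measure_mono fun ω hω => hupper ⟨hPmem ω, hω⟩
    _ ≤ ENNReal.ofReal s := hP s hs
    _ = volume (Ico 0 s) := by rw [Real.volume_Ico, sub_zero]
    _ ≤ volume.restrict (Icc 0 1) {p | c < γ p} := by
        rw [Measure.restrict_apply' measurableSet_Icc]
        exact measure_mono fun q hq => ⟨hlower hq, hq.1, hq.2.le.trans hs.2⟩

theorem lintegral_comp_le [SFinite μ] (hP : IsPValue μ P) (hPmeas : Measurable P)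
    (hPmem : ∀ ω, P ω ∈ Icc (0 : ℝ) 1) {γ : ℝ → ℝ≥0∞} (hγmeas : Measurable γ)
    (hγ : AntitoneOn γ (Icc 0 1)) :
    ∫⁻ ω, γ (P ω) ∂μ ≤ ∫⁻ p in Icc 0 1, γ p :=
  lintegral_le_lintegral_of_meas_lt_le (hγmeas.comp hPmeas) hγmeas (hP.meas_lt_comp_le hPmem hγ)

end IsPValue

open unitInterval in
theorem isPValue_unitInterval_coe : IsPValue (volume : Measure I) Subtype.val :=
  fun α hα => (unitInterval.volume_Iic ⟨α, hα⟩).le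

/-- A decreasing function `γ : [0,1] → [0,∞]` is a p-to-e calibrator
(i.e., `𝔼[γ(P)] ≤ 1` for every super-uniform `[0,1]`-valued random variable `P`, on any
probability space) if and only if `∫_0^1 γ(p) dp ≤ 1`. -/
theorem p_to_e_calibrator_iff
    (γ : ℝ → ℝ≥0∞) (hγmeas : Measurable γ) (hγ : AntitoneOn γ (Set.Icc (0 : ℝ) 1)) :
    (∀ (Ω : Type) (mΩ : MeasurableSpace Ω) (μ : Measure Ω),
        IsProbabilityMeasure μ → ∀ P : Ω → ℝ, Measurable P →
        (∀ ω, P ω ∈ Set.Icc (0 : ℝ) 1) →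
        (∀ α ∈ Set.Icc (0 : ℝ) 1, μ {ω | P ω ≤ α} ≤ ENNReal.ofReal α) →
        ∫⁻ ω, γ (P ω) ∂μ ≤ 1) ↔
      ∫⁻ p in Set.Icc (0 : ℝ) 1, γ p ≤ 1 := by
  constructor
  · intro h
    rw [← lintegral_subtype_comap measurableSet_Icc]
    exact h unitInterval _ volume inferInstance Subtype.val measurable_subtype_coe
      Subtype.property isPValue_unitInterval_coe
  · intro hint Ω _ μ _ P hPmeas hPmem hP
    exact (IsPValue.lintegral_comp_le hP hPmeas hPmem hγmeas hγ).trans hint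
end

section
/- Closed testing controls FWER: let H_1,…,H_m be hypotheses (subsets of a set of probability measures), and for each nonempty J ⊆ [m] let T_J be a test with sup_{Q ∈ ∩_{j∈J} H_j} Q(T_J = 1) ≤ α. Define the closed procedure rejecting H_j iff T_J rejects for every J containing j. Then for any distribution Q, Q(∃ j with Q ∈ H_j and H_j rejected) ≤ α. -/
open MeasureTheory ENNReal

/-- Closed testing controls the FWER: given hypotheses `H_1, …, H_m`
(sets of probability measures) and, for each nonempty `J ⊆ [m]`, a local level-`α`
test `T_J` of the intersection hypothesis, the closed procedure (reject `H_j` iff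
`T_J` rejects for every `J ∋ j`) satisfies, for every data-generating distribution `Q`,
`Q(some true `H_j` is rejected) ≤ α`. -/
theorem closed_testing_fwer_control
    {Ω : Type*} [MeasurableSpace Ω] (m : ℕ)
    (H : Fin m → Set (Measure Ω))
    (T : Finset (Fin m) → Set Ω)
    (hT : ∀ J : Finset (Fin m), MeasurableSet (T J))
    (α : ℝ)
    (hlevel : ∀ J : Finset (Fin m), J.Nonempty →
      ∀ Q : Measure Ω, IsProbabilityMeasure Q → (∀ j ∈ J, Q ∈ H j) →
        Q (T J) ≤ ENNReal.ofReal α) :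
    ∀ Q : Measure Ω, IsProbabilityMeasure Q →
      Q {ω | ∃ j : Fin m, Q ∈ H j ∧ ∀ J : Finset (Fin m), j ∈ J → ω ∈ T J}
        ≤ ENNReal.ofReal α := by
  intro Q hQ
  classical
  set Jstar : Finset (Fin m) := Finset.univ.filter (fun j => Q ∈ H j) with hJ
  by_cases hne : Jstar.Nonempty
  · have hsub : {ω | ∃ j : Fin m, Q ∈ H j ∧ ∀ J : Finset (Fin m), j ∈ J → ω ∈ T J}
        ⊆ T Jstar := by
      rintro ω ⟨j, hj, hall⟩
      exact hall Jstar (by simp [hJ, hj])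
    calc Q _ ≤ Q (T Jstar) := measure_mono hsub
      _ ≤ ENNReal.ofReal α := hlevel Jstar hne Q hQ (fun j hj => by
          simpa [hJ] using hj)
  · have : {ω | ∃ j : Fin m, Q ∈ H j ∧ ∀ J : Finset (Fin m), j ∈ J → ω ∈ T J} = ∅ := by
      ext ω
      simp only [Set.mem_setOf_eq, Set.mem_empty_iff_false, iff_false]
      rintro ⟨j, hj, -⟩
      exact hne ⟨j, by simp [hJ, hj]⟩
    simp [this]
end
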